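/- Suppose an MDP with deterministic transitions satisfies linear Bellman completeness with respect to feature maps φ_{1:H}, and fix a layer h and a direction θ ∈ R^d. Suppose rewards are r_ℓ ≡ 0 for ℓ < h and r_h(x,a) = φ_h(x,a)^T θ. If at every layer ℓ < h the FQI regression targets are exactly linearly realizable (targets y = φ_ℓ(x,a)^T θ̃_ℓ for the Bellman-backup parameter θ̃_ℓ) and for every ℓ < h the vector φ_ℓ^π(x) − φ_ℓ^{π̂}(x) lies in the span of the regression features at layer ℓ, then the minimum-norm least-squares FQI solutions θ̂_ℓ satisfy ⟨θ̃_ℓ − θ̂_ℓ, φ_ℓ^π(x) − φ_ℓ^{π̂}(x)⟩ = 0 for all ℓ < h, and consequently V_1^π(x; r) ≤ V_1^{π̂}(x; r) for the greedy policy π̂ computed by FQI, for every policy π. -/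
import Mathlib


open RealInnerProductSpace

/-! Deterministic-transition finite-horizon MDP with state space `X`, finite action
space `A`, deterministic transition function `f ℓ : X → A → X`, and feature maps
`φ ℓ : X → A → ℝ^d`. Layers are `0, 1, ..., L`; the rewards are `0` at layers `ℓ < L`
and `r_L(x,a) = ⟨φ L x a, θ⟩` at layer `L`, so the value of a policy `π` from initial
state `x` is `⟨φ_L^π(x), θ⟩`. -/

variable {X A : Type*}

/-- The state reached at layer `ℓ` starting from `x` and following policy `π` under the
deterministic dynamics `f`. -/
def roll (f : ℕ → X → A → X) (π : ℕ → X → A) (x : X) : ℕ → X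
  | 0 => x
  | ℓ + 1 => f ℓ (roll f π x ℓ) (π ℓ (roll f π x ℓ))

/-- `featRoll d φ f π x ℓ = φ_ℓ^π(x)`: the feature vector encountered at layer `ℓ` when
starting at `x` and following `π`. -/
def featRoll (d : ℕ) (φ : ℕ → X → A → EuclideanSpace ℝ (Fin d))
    (f : ℕ → X → A → X) (π : ℕ → X → A) (x : X) (ℓ : ℕ) : EuclideanSpace ℝ (Fin d) :=
  φ ℓ (roll f π x ℓ) (π ℓ (roll f π x ℓ))

lemma ortho_aux {d n : ℕ} (ψ : Fin n → EuclideanSpace ℝ (Fin d))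
    (u v : EuclideanSpace ℝ (Fin d))
    (h : ∑ i, ⟪ψ i, u⟫ • ψ i = 0)
    (hv : v ∈ Submodule.span ℝ (Set.range ψ)) : ⟪u, v⟫ = 0 := by
  have hz : ∀ i, ⟪ψ i, u⟫ = 0 := by
    have h2 : ⟪∑ i, ⟪ψ i, u⟫ • ψ i, u⟫ = 0 := by rw [h]; simp
    rw [sum_inner] at h2
    simp only [real_inner_smul_left] at h2
    have hsq : ∑ i, ⟪ψ i, u⟫ ^ 2 = 0 := by
      rw [← h2]; exact Finset.sum_congr rfl (fun i _ => by ring)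
    intro i
    have := (Finset.sum_eq_zero_iff_of_nonneg (fun i _ => sq_nonneg _)).mp hsq i
      (Finset.mem_univ i)
    exact pow_eq_zero_iff two_ne_zero |>.mp this
  obtain ⟨c, rfl⟩ := (Submodule.mem_span_range_iff_exists_fun ℝ).mp hv
  rw [inner_sum]
  refine Finset.sum_eq_zero fun i _ => ?_
  rw [real_inner_smul_right, real_inner_comm, hz i, mul_zero]

/-- FQI with exact linear optimization under deterministic transitions.
Suppose the MDP is linearly Bellman complete (`hLBC`), rewards are `0` below layer `L`
and `⟨φ L x a, θ⟩` at layer `L`, the FQI regression targets are exactly linearly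
realizable with Bellman-backup parameters `θtil ℓ` (`hbackup`), the FQI estimates
`θhat ℓ` solve the least-squares normal equations over regression features `ψ ℓ`
with these realizable targets (`hls`, the defining property of the minimum-norm
least-squares solution), `π̂` is greedy w.r.t. `Q̂_ℓ = ⟨φ ℓ ·, θhat ℓ⟩` (`hgreedy`), and
for every `ℓ < L` the vector `φ_ℓ^π(x) − φ_ℓ^{π̂}(x)` lies in the span of the layer-`ℓ`
regression features (`hspan`). Then `⟨θtil ℓ − θhat ℓ, φ_ℓ^π(x) − φ_ℓ^{π̂}(x)⟩ = 0` for
all `ℓ < L`, and consequently `V₁^π(x; r) ≤ V₁^{π̂}(x; r)`. -/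
theorem stmt19 [Fintype A] [Nonempty A] (d L : ℕ)
    (f : ℕ → X → A → X) (φ : ℕ → X → A → EuclideanSpace ℝ (Fin d))
    (hLBC : ∀ (ℓ : ℕ) (θ' : EuclideanSpace ℝ (Fin d)), ∃ w : EuclideanSpace ℝ (Fin d),
      ∀ x a, ⟪φ ℓ x a, w⟫ =
        Finset.univ.sup' Finset.univ_nonempty (fun a' => ⟪φ (ℓ + 1) (f ℓ x a) a', θ'⟫))
    (θ : EuclideanSpace ℝ (Fin d))
    (θhat θtil : ℕ → EuclideanSpace ℝ (Fin d))
    (hθL : θhat L = θ)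
    (hbackup : ∀ ℓ < L, ∀ x a, ⟪φ ℓ x a, θtil ℓ⟫ =
      Finset.univ.sup' Finset.univ_nonempty
        (fun a' => ⟪φ (ℓ + 1) (f ℓ x a) a', θhat (ℓ + 1)⟫))
    (Nr : ℕ → ℕ) (ψ : (ℓ : ℕ) → Fin (Nr ℓ) → EuclideanSpace ℝ (Fin d))
    (hls : ∀ ℓ < L, ∑ i, ⟪ψ ℓ i, θhat ℓ⟫ • ψ ℓ i = ∑ i, ⟪ψ ℓ i, θtil ℓ⟫ • ψ ℓ i)
    (πhat : ℕ → X → A)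
    (hgreedy : ∀ ℓ x, ⟪φ ℓ x (πhat ℓ x), θhat ℓ⟫ =
      Finset.univ.sup' Finset.univ_nonempty (fun a => ⟪φ ℓ x a, θhat ℓ⟫))
    (x : X) (π : ℕ → X → A)
    (hspan : ∀ ℓ < L,
      featRoll d φ f π x ℓ - featRoll d φ f πhat x ℓ
        ∈ Submodule.span ℝ (Set.range (ψ ℓ))) :
    (∀ ℓ < L,
      ⟪θtil ℓ - θhat ℓ, featRoll d φ f π x ℓ - featRoll d φ f πhat x ℓ⟫ = 0)
    ∧ ⟪featRoll d φ f π x L, θ⟫ ≤ ⟪featRoll d φ f πhat x L, θ⟫ := by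
  classical
  -- orthogonality at each layer
  have horth : ∀ ℓ < L,
      ⟪θtil ℓ - θhat ℓ, featRoll d φ f π x ℓ - featRoll d φ f πhat x ℓ⟫ = 0 := by
    intro ℓ hℓ
    refine ortho_aux (ψ ℓ) _ _ ?_ (hspan ℓ hℓ)
    have := hls ℓ hℓ
    have : ∑ i, (⟪ψ ℓ i, θtil ℓ⟫ - ⟪ψ ℓ i, θhat ℓ⟫) • ψ ℓ i = 0 := by
      simp only [sub_smul, Finset.sum_sub_distrib, this, sub_self]
    simpa only [inner_sub_right] using this
  refine ⟨horth, ?_⟩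
  -- main induction: D ℓ ≤ 0 for all ℓ ≤ L
  have hD : ∀ ℓ ≤ L,
      ⟪featRoll d φ f π x ℓ - featRoll d φ f πhat x ℓ, θhat ℓ⟫ ≤ 0 := by
    intro ℓ hℓ
    induction ℓ with
    | zero =>
        rw [inner_sub_left]
        have hg := hgreedy 0 x
        have hle : ⟪φ 0 x (π 0 x), θhat 0⟫ ≤
            Finset.univ.sup' Finset.univ_nonempty (fun a => ⟪φ 0 x a, θhat 0⟫) :=
          Finset.le_sup' (fun a => ⟪φ 0 x a, θhat 0⟫) (Finset.mem_univ _)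
        simp only [featRoll, roll]
        rw [hg]
        linarith
    | succ ℓ ih =>
        have hℓL : ℓ < L := Nat.lt_of_succ_le hℓ
        have ihv := ih (Nat.le_of_lt hℓL)
        -- switch θhat ℓ to θtil ℓ via orthogonality
        have hor := horth ℓ hℓL
        simp only [inner_sub_left, inner_sub_right] at hor
        have c1 := real_inner_comm (θtil ℓ) (featRoll d φ f π x ℓ)
        have c2 := real_inner_comm (θtil ℓ) (featRoll d φ f πhat x ℓ)
        have c3 := real_inner_comm (θhat ℓ) (featRoll d φ f π x ℓ)
        have c4 := real_inner_comm (θhat ℓ) (featRoll d φ f πhat x ℓ)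
        set sπ := roll f π x ℓ with hsπ
        set sh := roll f πhat x ℓ with hsh
        have hA : ⟪featRoll d φ f π x ℓ, θtil ℓ⟫ =
            Finset.univ.sup' Finset.univ_nonempty
              (fun a' => ⟪φ (ℓ + 1) (roll f π x (ℓ + 1)) a', θhat (ℓ + 1)⟫) := by
          have := hbackup ℓ hℓL sπ (π ℓ sπ)
          simpa [featRoll, roll] using this
        have hB : ⟪featRoll d φ f πhat x ℓ, θtil ℓ⟫ =
            Finset.univ.sup' Finset.univ_nonempty
              (fun a' => ⟪φ (ℓ + 1) (roll f πhat x (ℓ + 1)) a', θhat (ℓ + 1)⟫) := by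
          have := hbackup ℓ hℓL sh (πhat ℓ sh)
          simpa [featRoll, roll] using this
        have hAge : ⟪featRoll d φ f π x (ℓ + 1), θhat (ℓ + 1)⟫ ≤
            ⟪featRoll d φ f π x ℓ, θtil ℓ⟫ := by
          rw [hA, featRoll]
          exact Finset.le_sup'
            (fun a' => ⟪φ (ℓ + 1) (roll f π x (ℓ + 1)) a', θhat (ℓ + 1)⟫)
            (Finset.mem_univ _)
        have hBeq : ⟪featRoll d φ f πhat x ℓ, θtil ℓ⟫ =
            ⟪featRoll d φ f πhat x (ℓ + 1), θhat (ℓ + 1)⟫ := by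
          rw [hB, featRoll, ← hgreedy (ℓ + 1) (roll f πhat x (ℓ + 1))]
        rw [inner_sub_left]
        rw [inner_sub_left] at ihv
        linarith
  have := hD L le_rfl
  rw [inner_sub_left, hθL] at this
  linarith
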